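/- Edgeworth–Cornish-Fisher consistency at first order: let Gₙ(x) = Φ(x) − (η₃(x²+2)/(12√n))φ(x) + rₙ(x) with sup_x |rₙ(x)| = o(n^{-1/2}), where Φ and φ are the standard normal cdf and pdf and η₃ ∈ ℝ. Then for each fixed v ∈ (0,1), any solution xₙ of Gₙ(xₙ) = v satisfies xₙ = Φ^{-1}(v) + (η₃/(12√n))((Φ^{-1}(v))² + 2) + o(n^{-1/2}). -/

import Mathlib

open MeasureTheory Filter Real

/-- Standard normal density. -/
noncomputable def gauss (x : ℝ) : ℝ := (Real.sqrt (2 * Real.pi))⁻¹ * Real.exp (-x ^ 2 / 2)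

/-- Standard normal cdf. -/
noncomputable def normCDF (x : ℝ) : ℝ := ∫ t in Set.Iic x, gauss t

/-! If `Gₙ(xₙ) = v = Φ(y)`, the Edgeworth expansion gives
`√n (Φ(xₙ) - Φ(y)) = η₃ (xₙ² + 2) φ(xₙ) / 12 + o(1)`. The right side is bounded, so `Φ(xₙ) → Φ(y)`
and hence `xₙ → y`; it then tends to `η₃ (y² + 2) φ(y) / 12`. Dividing by the difference quotient
of `Φ` between `y` and `xₙ`, which tends to `φ(y) > 0`, gives `√n (xₙ - y) → η₃ (y² + 2) / 12`. -/

theorem StrictMono.tendsto_of_tendsto_apply {α β ι : Type*} [LinearOrder α] [TopologicalSpace α]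
    [OrderTopology α] [Preorder β] [TopologicalSpace β] [OrderTopology β] {f : α → β}
    (hf : StrictMono f) {l : Filter ι} {x : ι → α} {a : α}
    (h : Tendsto (fun i => f (x i)) l (nhds (f a))) : Tendsto x l (nhds a) := by
  rw [tendsto_order] at h ⊢
  exact ⟨fun b hb => (h.1 _ (hf hb)).mono fun _ => hf.lt_iff_lt.mp,
    fun b hb => (h.2 _ (hf hb)).mono fun _ => hf.lt_iff_lt.mp⟩

theorem HasDerivAt.tendsto_mul_sub_of_tendsto_mul_sub_apply {𝕜 ι : Type*}
    [NontriviallyNormedField 𝕜] {F : 𝕜 → 𝕜} {F' a L : 𝕜} (hF : HasDerivAt F F' a) (hF' : F' ≠ 0)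
    {l : Filter ι} {x r : ι → 𝕜} (hx : Tendsto x l (nhds a))
    (hr : Tendsto (fun i => r i * (F (x i) - F a)) l (nhds L)) :
    Tendsto (fun i => r i * (x i - a)) l (nhds (L / F')) := by
  have hslope : Tendsto (fun i => dslope F a (x i)) l (nhds F') := by
    have := (continuousAt_dslope_same.2 hF.differentiableAt).tendsto.comp hx
    rwa [dslope_same, hF.deriv] at this
  refine (hr.div hslope hF').congr' ((hslope.eventually_ne hF').mono fun i hi => ?_)
  change r i * (F (x i) - F a) / dslope F a (x i) = r i * (x i - a)
  rw [← sub_smul_dslope, smul_eq_mul]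
  field_simp

theorem gauss_pos (x : ℝ) : 0 < gauss x := by
  unfold gauss
  positivity

@[fun_prop]
theorem continuous_gauss : Continuous gauss := by
  unfold gauss
  fun_prop

theorem integrable_gauss : Integrable gauss := by
  have h : gauss = fun x => (√(2 * π))⁻¹ * exp (-(1 / 2) * x ^ 2) := by
    funext x; unfold gauss; ring_nf
  rw [h]
  exact (integrable_exp_neg_mul_sq (by norm_num)).const_mul _

theorem hasDerivAt_normCDF (x : ℝ) : HasDerivAt normCDF (gauss x) x := by
  have hshift : ∀ z, normCDF z = normCDF 0 + ∫ t in (0 : ℝ)..z, gauss t := fun z => by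
    rw [normCDF, normCDF, ← intervalIntegral.integral_Iic_sub_Iic integrable_gauss.integrableOn
      integrable_gauss.integrableOn]
    ring
  refine HasDerivAt.congr_of_eventuallyEq ?_ (Eventually.of_forall hshift)
  exact (intervalIntegral.integral_hasDerivAt_right integrable_gauss.intervalIntegrable
    (continuous_gauss.stronglyMeasurableAtFilter _ _) continuous_gauss.continuousAt).const_add _

theorem strictMono_normCDF : StrictMono normCDF :=
  strictMono_of_deriv_pos fun z => (hasDerivAt_normCDF z).deriv ▸ gauss_pos z

theorem sq_add_two_mul_gauss_le_one (z : ℝ) : (z ^ 2 + 2) * gauss z ≤ 1 := by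
  have hexp : (z ^ 2 + 2) * exp (-z ^ 2 / 2) ≤ 2 := by
    rw [neg_div, exp_neg, ← div_eq_mul_inv, div_le_iff₀ (exp_pos _)]
    linarith [add_one_le_exp (z ^ 2 / 2)]
  have hsqrt : 2 ≤ √(2 * π) := le_sqrt_of_sq_le (by nlinarith [pi_gt_three])
  calc (z ^ 2 + 2) * gauss z = (z ^ 2 + 2) * exp (-z ^ 2 / 2) / √(2 * π) := by
        unfold gauss; ring
    _ ≤ 2 / 2 := div_le_div₀ (by norm_num) hexp (by norm_num) hsqrt
    _ = 1 := by norm_num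

/-- The first Edgeworth correction: `Gₙ(z) ≈ Φ(z) - edgeworthTerm η₃ z / √n`. -/
noncomputable def edgeworthTerm (η₃ z : ℝ) : ℝ := η₃ * (z ^ 2 + 2) * gauss z / 12

theorem continuous_edgeworthTerm (η₃ : ℝ) : Continuous (edgeworthTerm η₃) := by
  unfold edgeworthTerm
  fun_prop

theorem abs_edgeworthTerm_le (η₃ z : ℝ) : |edgeworthTerm η₃ z| ≤ |η₃| / 12 := by
  have hpos : 0 ≤ (z ^ 2 + 2) * gauss z := (mul_pos (by positivity) (gauss_pos z)).le
  rw [edgeworthTerm, mul_assoc, abs_div, abs_mul, abs_of_nonneg hpos,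
    abs_of_pos (by norm_num : (0 : ℝ) < 12)]
  exact div_le_div_of_nonneg_right (mul_le_of_le_one_right (abs_nonneg _)
    (sq_add_two_mul_gauss_le_one z)) (by norm_num : (0 : ℝ) ≤ 12)

theorem abs_mul_sub_edgeworthTerm_le {η₃ t a z s : ℝ} (ht : 0 < t)
    (h : |a - (normCDF z - η₃ * (z ^ 2 + 2) / (12 * t) * gauss z)| ≤ s) :
    |t * (normCDF z - a) - edgeworthTerm η₃ z| ≤ t * s := by
  have hrw : t * (normCDF z - a) - edgeworthTerm η₃ z
      = -(t * (a - (normCDF z - η₃ * (z ^ 2 + 2) / (12 * t) * gauss z))) := by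
    rw [edgeworthTerm]; field_simp; ring
  rw [hrw, abs_neg, abs_mul, abs_of_pos ht]
  exact mul_le_mul_of_nonneg_left h ht.le

theorem cornish_fisher_first_order_general (η₃ : ℝ) (G : ℕ → ℝ → ℝ)
    (s : ℕ → ℝ)
    (hs : ∀ n : ℕ, 1 ≤ n → ∀ x : ℝ,
      |G n x - (normCDF x - η₃ * (x ^ 2 + 2) / (12 * Real.sqrt n) * gauss x)| ≤ s n)
    (hso : Tendsto (fun (n : ℕ) => Real.sqrt n * s n) atTop (nhds 0))
    (v : ℝ)
    (y : ℝ) (hy : normCDF y = v)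
    (x : ℕ → ℝ) (hx : ∀ n, G n (x n) = v) :
    Tendsto (fun (n : ℕ) =>
        Real.sqrt n * (x n - (y + η₃ / (12 * Real.sqrt n) * (y ^ 2 + 2))))
      atTop (nhds 0) := by
  have hsqrt_pos : ∀ᶠ n : ℕ in atTop, 0 < √(n : ℝ) :=
    (eventually_ge_atTop 1).mono fun n hn => sqrt_pos.2 (by exact_mod_cast hn)
  have hres : Tendsto (fun n : ℕ => √(n : ℝ) * (normCDF (x n) - v) - edgeworthTerm η₃ (x n))
      atTop (nhds 0) :=
    squeeze_zero_norm' (((eventually_ge_atTop 1).and hsqrt_pos).mono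
      fun n hn => abs_mul_sub_edgeworthTerm_le hn.2 (hx n ▸ hs n hn.1 (x n))) hso
  have hinv : Tendsto (fun n : ℕ => (√(n : ℝ))⁻¹) atTop (nhds 0) :=
    (tendsto_sqrt_atTop.comp tendsto_natCast_atTop_atTop).inv_tendsto_atTop
  have hΦx : Tendsto (fun n => normCDF (x n)) atTop (nhds (normCDF y)) := by
    have hE := hinv.zero_mul_isBoundedUnder_le (g := fun n => edgeworthTerm η₃ (x n))
      (isBoundedUnder_of ⟨_, fun n => abs_edgeworthTerm_le η₃ (x n)⟩)
    have hsum := ((hinv.mul hres).add hE).add_const v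
    rw [mul_zero, zero_add, zero_add, ← hy] at hsum
    refine hsum.congr' (hsqrt_pos.mono fun n hn => ?_)
    field_simp
    ring
  have hxy : Tendsto x atTop (nhds y) := strictMono_normCDF.tendsto_of_tendsto_apply hΦx
  have hlim : Tendsto (fun n : ℕ => √n * (normCDF (x n) - normCDF y)) atTop
      (nhds (edgeworthTerm η₃ y)) := by
    simpa [hy] using hres.add (((continuous_edgeworthTerm η₃).tendsto y).comp hxy)
  have hquant := ((hasDerivAt_normCDF y).tendsto_mul_sub_of_tendsto_mul_sub_apply
    (gauss_pos y).ne' hxy hlim).sub_const (edgeworthTerm η₃ y / gauss y)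
  rw [sub_self] at hquant
  refine hquant.congr' (hsqrt_pos.mono fun n hn => ?_)
  rw [edgeworthTerm]
  field_simp [(gauss_pos y).ne']
  ring

/-- Edgeworth–Cornish-Fisher consistency at first order: a uniform one-term Edgeworth
expansion of Gₙ yields the corresponding one-term Cornish–Fisher expansion of quantiles. -/
theorem cornish_fisher_first_order (η₃ : ℝ) (G : ℕ → ℝ → ℝ)
    (hcont : ∀ n, Continuous (G n)) (hmono : ∀ n, StrictMono (G n))
    (s : ℕ → ℝ)
    (hs : ∀ n : ℕ, 1 ≤ n → ∀ x : ℝ,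
      |G n x - (normCDF x - η₃ * (x ^ 2 + 2) / (12 * Real.sqrt n) * gauss x)| ≤ s n)
    (hso : Tendsto (fun (n : ℕ) => Real.sqrt n * s n) atTop (nhds 0))
    (v : ℝ) (hv : v ∈ Set.Ioo (0 : ℝ) 1)
    (y : ℝ) (hy : normCDF y = v)
    (x : ℕ → ℝ) (hx : ∀ n, G n (x n) = v) :
    Tendsto (fun (n : ℕ) =>
        Real.sqrt n * (x n - (y + η₃ / (12 * Real.sqrt n) * (y ^ 2 + 2))))
      atTop (nhds 0) :=
  cornish_fisher_first_order_general η₃ G s hs hso v y hy x hx
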